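/- Let u = (−1 + i√3)/2 ∈ ℂ, and let A₅ = [[1,0,0,0,0],[−4,1,0,0,0],[6,−3,1,0,0],[−4,3,−2,1,0],[1,−1,1,−1,1]], B₅ = [[1,u,u²,u³,u⁴],[0,1,2u,3u²,4u³],[0,0,1,3u,6u²],[0,0,0,1,4u],[0,0,0,0,1]] in SL(5,ℂ). Then for every t ∈ ℂ with t ≠ 0 and t ≠ 1, det(I − t⁻¹·A₅·B₅⁻¹·A₅⁻¹ + A₅·B₅⁻¹·A₅⁻¹·B₅ − t·B₅ + B₅·A₅·B₅⁻¹·A₅⁻¹) divided by det(t·B₅ − I) equals −(1/t⁵)·(t−1)·(t⁴−9t³+44t²−9t+1). That is, the twisted Alexander invariant Δ_{K,ρ₅}(t) = −(1/t⁵)(t−1)(t⁴−9t³+44t²−9t+1). -/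

import Mathlib

/-!
The representation `ρ₅` is the symmetric fourth power of the holonomy representation
`a ↦ !![1, 0; -1, 1]`, `b ↦ !![1, u; 0, 1]`, with `u` a primitive cube root of unity.
Since `Sym⁴` is multiplicative, each word in `A₅, B₅` occurring in the Fox derivative is `Sym⁴`
of the corresponding `2 × 2` word, so `t` times the numerator is an explicit `5 × 5` matrix
whose entries are polynomials in `t` and `u`. Its determinant, reduced modulo `u² + u + 1`,
is `-(t - 1)⁶ (t⁴ - 9t³ + 44t² - 9t + 1)`. As `B₅` is unipotent upper triangular, the
denominator is `(t - 1)⁵`.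
-/

open Matrix

noncomputable def u41 : ℂ := (-1 + Complex.I * Real.sqrt 3) / 2

noncomputable def A5 : Matrix (Fin 5) (Fin 5) ℂ :=
  !![1, 0, 0, 0, 0; -4, 1, 0, 0, 0; 6, -3, 1, 0, 0; -4, 3, -2, 1, 0; 1, -1, 1, -1, 1]

noncomputable def B5 : Matrix (Fin 5) (Fin 5) ℂ :=
  !![1, u41, u41 ^ 2, u41 ^ 3, u41 ^ 4; 0, 1, 2 * u41, 3 * u41 ^ 2, 4 * u41 ^ 3;
     0, 0, 1, 3 * u41, 6 * u41 ^ 2; 0, 0, 0, 1, 4 * u41; 0, 0, 0, 0, 1]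

section SymPow4

variable {R : Type*} [CommRing R]

/-- The matrix of `p(x, y) ↦ p(a x + c y, b x + d y)` on the basis `x⁴, x³y, x²y², xy³, y⁴`,
where `M = !![a, b; c, d]`: column `j` lists the coefficients of
`(a x + c y)^(4-j) (b x + d y)^j`. -/
def symPow4 (M : Matrix (Fin 2) (Fin 2) R) : Matrix (Fin 5) (Fin 5) R :=
  let a := M 0 0; let b := M 0 1; let c := M 1 0; let d := M 1 1
  !![a ^ 4, a ^ 3 * b, a ^ 2 * b ^ 2, a * b ^ 3, b ^ 4;
     4 * a ^ 3 * c, a ^ 3 * d + 3 * a ^ 2 * b * c, 2 * a ^ 2 * b * d + 2 * a * b ^ 2 * c,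
       3 * a * b ^ 2 * d + b ^ 3 * c, 4 * b ^ 3 * d;
     6 * a ^ 2 * c ^ 2, 3 * a ^ 2 * c * d + 3 * a * b * c ^ 2,
       a ^ 2 * d ^ 2 + 4 * a * b * c * d + b ^ 2 * c ^ 2, 3 * a * b * d ^ 2 + 3 * b ^ 2 * c * d,
       6 * b ^ 2 * d ^ 2;
     4 * a * c ^ 3, 3 * a * c ^ 2 * d + b * c ^ 3, 2 * a * c * d ^ 2 + 2 * b * c ^ 2 * d,
       a * d ^ 3 + 3 * b * c * d ^ 2, 4 * b * d ^ 3;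
     c ^ 4, c ^ 3 * d, c ^ 2 * d ^ 2, c * d ^ 3, d ^ 4]

theorem symPow4_mul (M N : Matrix (Fin 2) (Fin 2) R) :
    symPow4 (M * N) = symPow4 M * symPow4 N := by
  ext i j
  fin_cases i <;> fin_cases j <;> simp [symPow4, mul_apply, Fin.sum_univ_succ] <;> ring

theorem symPow4_one : symPow4 (1 : Matrix (Fin 2) (Fin 2) R) = 1 := by
  ext i j
  fin_cases i <;> fin_cases j <;> simp [symPow4]

theorem inv_symPow4 {M : Matrix (Fin 2) (Fin 2) R} (hM : IsUnit M.det) :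
    (symPow4 M)⁻¹ = symPow4 M⁻¹ :=
  inv_eq_right_inv <| by rw [← symPow4_mul, mul_nonsing_inv M hM, symPow4_one]

end SymPow4

theorem det_smul_sub_one_of_isUpperTriangular {n R : Type*} [Fintype n] [LinearOrder n]
    [CommRing R] {B : Matrix n n R} (hB : B.IsUpperTriangular) (hdiag : ∀ i, B i i = 1)
    (t : R) : det (t • B - 1) = (t - 1) ^ Fintype.card n := by
  have htri : (t • B - 1).IsUpperTriangular := fun i j hij => by
    simp [hB hij, one_apply_ne (show j < i from hij).ne']
  simp [det_of_isUpperTriangular htri, hdiag]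

section Holonomy

variable {R : Type*} [CommRing R]

def holonomyA : Matrix (Fin 2) (Fin 2) R := !![1, 0; -1, 1]

def holonomyB (u : R) : Matrix (Fin 2) (Fin 2) R := !![1, u; 0, 1]

theorem inv_holonomyA : (holonomyA : Matrix (Fin 2) (Fin 2) R)⁻¹ = !![1, 0; 1, 1] :=
  inv_eq_right_inv <| by simp [holonomyA, one_fin_two]

theorem inv_holonomyB (u : R) : (holonomyB u)⁻¹ = !![1, -u; 0, 1] :=
  inv_eq_right_inv <| by simp [holonomyB, one_fin_two]

theorem isUnit_det_holonomyA : IsUnit (holonomyA : Matrix (Fin 2) (Fin 2) R).det := by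
  simp [holonomyA, det_fin_two]

theorem isUnit_det_holonomyB (u : R) : IsUnit (holonomyB u).det := by
  simp [holonomyB, det_fin_two]

theorem det_symPow4_foxDerivative (u t : R) (hu : u ^ 2 + u + 1 = 0) :
    det (t • 1 - symPow4 (holonomyA * (holonomyB u)⁻¹ * holonomyA⁻¹)
      + t • symPow4 (holonomyA * (holonomyB u)⁻¹ * holonomyA⁻¹ * holonomyB u)
      - t ^ 2 • symPow4 (holonomyB u)
      + t • symPow4 (holonomyB u * holonomyA * (holonomyB u)⁻¹ * holonomyA⁻¹)) =
      -((t - 1) ^ 6 * (t ^ 4 - 9 * t ^ 3 + 44 * t ^ 2 - 9 * t + 1)) := by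
  rw [inv_holonomyA, inv_holonomyB]
  simp only [holonomyA, holonomyB, cons_mul, vecMul_cons, empty_mul, Equiv.apply_symm_apply]
  simp only [det_succ_row_zero, Fin.sum_univ_succ, Finset.univ_unique, Finset.sum_singleton,
    submatrix_apply, Fin.zero_succAbove, Fin.succ_succAbove_zero, Fin.succ_succAbove_succ,
    det_unique, Fin.default_eq_zero, Fin.val_zero, Fin.val_succ]
  simp [symPow4]
  grind

end Holonomy

theorem u41_sq_add_u41_add_one : u41 ^ 2 + u41 + 1 = 0 := by
  have hsqrt : ((Real.sqrt 3 : ℝ) : ℂ) ^ 2 = 3 := by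
    rw [← Complex.ofReal_pow, Real.sq_sqrt (by norm_num)]
    norm_num
  unfold u41
  linear_combination (3 / 4 : ℂ) * Complex.I_sq + (Complex.I ^ 2 / 4) * hsqrt

theorem A5_eq_symPow4 : A5 = symPow4 holonomyA := by
  ext i j
  fin_cases i <;> fin_cases j <;> norm_num [A5, symPow4, holonomyA]

theorem B5_eq_symPow4 : B5 = symPow4 (holonomyB u41) := by
  ext i j
  fin_cases i <;> fin_cases j <;> simp [B5, symPow4, holonomyB]

theorem B5_isUpperTriangular : B5.IsUpperTriangular := by
  intro i j hij
  fin_cases i <;> fin_cases j <;> simp_all [B5]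

theorem det_foxDerivative_rho5 {t : ℂ} (ht : t ≠ 0) :
    t ^ 5 * det ((1 : Matrix (Fin 5) (Fin 5) ℂ) - t⁻¹ • (A5 * B5⁻¹ * A5⁻¹) +
      A5 * B5⁻¹ * A5⁻¹ * B5 - t • B5 + B5 * A5 * B5⁻¹ * A5⁻¹) =
      -((t - 1) ^ 6 * (t ^ 4 - 9 * t ^ 3 + 44 * t ^ 2 - 9 * t + 1)) := by
  rw [← det_symPow4_foxDerivative u41 t u41_sq_add_u41_add_one]
  convert (det_smul _ t).symm using 2
  · simp
  rw [A5_eq_symPow4, B5_eq_symPow4, inv_symPow4 isUnit_det_holonomyA,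
    inv_symPow4 (isUnit_det_holonomyB u41)]
  simp only [← symPow4_mul, smul_add, smul_sub, smul_smul, mul_inv_cancel₀ ht, one_smul, sq]

theorem twisted_alexander_rho5 :
    ∀ t : ℂ, t ≠ 0 → t ≠ 1 →
      det ((1 : Matrix (Fin 5) (Fin 5) ℂ) - t⁻¹ • (A5 * B5⁻¹ * A5⁻¹) +
          A5 * B5⁻¹ * A5⁻¹ * B5 - t • B5 + B5 * A5 * B5⁻¹ * A5⁻¹) /
        det (t • B5 - 1) =
      -(1 / t ^ 5) * (t - 1) * (t ^ 4 - 9 * t ^ 3 + 44 * t ^ 2 - 9 * t + 1) := by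
  intro t ht ht1
  have hden : det (t • B5 - 1) = (t - 1) ^ 5 :=
    det_smul_sub_one_of_isUpperTriangular B5_isUpperTriangular
      (fun i => by fin_cases i <;> simp [B5]) t
  rw [hden, div_eq_iff (pow_ne_zero 5 (sub_ne_zero.mpr ht1))]
  apply mul_left_cancel₀ (pow_ne_zero 5 ht)
  rw [det_foxDerivative_rho5 ht]
  field_simp
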